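/- arXiv:2004.12957 — 4 statements merged into one kernel-verified Lean document; each statement's English description precedes it below -/
import Mathlib

section
/- Suppose positive real numbers P_tx, D_tx, D_rx, η, ρ_t, ρ_r, λ and nonnegative reals |E_t|, |E_r|, S_t, S_r, P_rx, |g| satisfy: S_t = P_tx·D_tx/(4π·ρ_t²) (radiation intensity at the IRS), S_t = |E_t|²/(2η), |E_r|² = (|g|²/(4π·ρ_r²))·|E_t|² (reflected field at distance ρ_r given by the tile response function), S_r = |E_r|²/(2η), and P_rx = S_r·D_rx·λ²/(4π) (power collected by the receive antenna of effective area D_rx·λ²/(4π)). Then P_rx/P_tx = D_tx·D_rx·(4π·|g|²/λ²)·(λ/(4π·ρ_t))²·(λ/(4π·ρ_r))²; i.e., the free-space path-loss of the IRS-assisted link decomposes as PL_IRS = (4π|g|²/λ²)·PL_t·PL_r with PL_t = (λ/(4πρ_t))² and PL_r = (λ/(4πρ_r))². -/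
open Real

theorem intensity_eq_mul_of_field_sq_eq {η E E' S S' c : ℝ}
    (hS : S = E ^ 2 / (2 * η)) (hE' : E' ^ 2 = c * E ^ 2) (hS' : S' = E' ^ 2 / (2 * η)) :
    S' = c * S := by
  rw [hS', hE', hS, mul_div_assoc]

theorem pathloss_factors_eq {Dtx Drx g ρt ρr lam : ℝ}
    (hρt : ρt ≠ 0) (hρr : ρr ≠ 0) (hlam : lam ≠ 0) :
    Dtx * Drx * (4 * π * g ^ 2 / lam ^ 2) *
        (lam / (4 * π * ρt)) ^ 2 * (lam / (4 * π * ρr)) ^ 2 =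
      g ^ 2 / (4 * π * ρr ^ 2) * (Dtx / (4 * π * ρt ^ 2)) * (Drx * lam ^ 2 / (4 * π)) := by
  field_simp

theorem irs_pathloss_decomposition_general
    (Ptx Dtx Drx η ρt ρr lam : ℝ)
    (hPtx : 0 < Ptx)
    (hρt : 0 < ρt) (hρr : 0 < ρr) (hlam : 0 < lam)
    (Et Er St Sr Prx g : ℝ)
    (h1 : St = Ptx * Dtx / (4 * Real.pi * ρt ^ 2))
    (h2 : St = Et ^ 2 / (2 * η))
    (h3 : Er ^ 2 = (g ^ 2 / (4 * Real.pi * ρr ^ 2)) * Et ^ 2)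
    (h4 : Sr = Er ^ 2 / (2 * η))
    (h5 : Prx = Sr * Drx * lam ^ 2 / (4 * Real.pi)) :
    Prx / Ptx = Dtx * Drx * (4 * Real.pi * g ^ 2 / lam ^ 2) *
      (lam / (4 * Real.pi * ρt)) ^ 2 * (lam / (4 * Real.pi * ρr)) ^ 2 := by
  have hSr : Sr = g ^ 2 / (4 * π * ρr ^ 2) * St := intensity_eq_mul_of_field_sq_eq h2 h3 h4
  rw [pathloss_factors_eq hρt.ne' hρr.ne' hlam.ne', h5, hSr, h1]
  field_simp

/-- Lemma 1 (free-space path-loss of an IRS-assisted link):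
`P_rx / P_tx = D_tx · D_rx · (4π|g|²/λ²) · PL_t · PL_r`. -/
theorem irs_pathloss_decomposition
    (Ptx Dtx Drx η ρt ρr lam : ℝ)
    (hPtx : 0 < Ptx) (hDtx : 0 < Dtx) (hDrx : 0 < Drx) (hη : 0 < η)
    (hρt : 0 < ρt) (hρr : 0 < ρr) (hlam : 0 < lam)
    (Et Er St Sr Prx g : ℝ)
    (hEt : 0 ≤ Et) (hEr : 0 ≤ Er) (hSt : 0 ≤ St) (hSr : 0 ≤ Sr)
    (hPrx : 0 ≤ Prx) (hg : 0 ≤ g)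
    (h1 : St = Ptx * Dtx / (4 * Real.pi * ρt ^ 2))
    (h2 : St = Et ^ 2 / (2 * η))
    (h3 : Er ^ 2 = (g ^ 2 / (4 * Real.pi * ρr ^ 2)) * Et ^ 2)
    (h4 : Sr = Er ^ 2 / (2 * η))
    (h5 : Prx = Sr * Drx * lam ^ 2 / (4 * Real.pi)) :
    Prx / Ptx = Dtx * Drx * (4 * Real.pi * g ^ 2 / lam ^ 2) *
      (lam / (4 * Real.pi * ρt)) ^ 2 * (lam / (4 * Real.pi * ρr)) ^ 2 :=
  irs_pathloss_decomposition_general Ptx Dtx Drx η ρt ρr lam hPtx hρt hρr hlam Et Er St Sr Prx g h1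
    h2 h3 h4 h5
end

section
/- Let θ_t ∈ [0, π/2), and let φ_t, ϕ, θ_r, φ_r be real numbers. Define c = cos(θ_t)/√((cos(ϕ)·sin(θ_t)·cos(φ_t) + sin(ϕ)·sin(θ_t)·sin(φ_t))² + cos²(θ_t)) and g̃ = c·√((cos(ϕ)·cos(θ_r)·sin(φ_r) - sin(ϕ)·cos(θ_r)·cos(φ_r))² + (sin(ϕ)·sin(φ_r) + cos(ϕ)·cos(φ_r))²). Then 0 ≤ g̃ ≤ 1, and if θ_t = 0 and θ_r = 0 then g̃ = 1. Consequently, for every λ > 0, L_x > 0, L_y > 0, and τ ∈ (0,1], the matched-angle tile response magnitude (√(4π)·τ·L_x·L_y/λ)·g̃ is at most √(4π)·L_x·L_y/λ, with equality when τ = 1, θ_t = 0, and θ_r = 0. -/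
/-! The incidence factor `c` has the form `b / √(a² + b²)` with `b = cos θt ≥ 0`, so it lies in
`[0, 1]`. By the subtraction formulas the radicand of the reflection factor is
`cos² θr · sin² (φr - ϕ) + cos² (φr - ϕ) = 1 - sin² θr · sin² (φr - ϕ)`, which lies in `[0, 1]` and
equals `1` at `θr = 0`; at `θt = 0` also `c = 1`. -/

open Real

theorem div_sqrt_sq_add_sq_le_one (a b : ℝ) : b / √(a ^ 2 + b ^ 2) ≤ 1 :=
  div_le_one_of_le₀ ((le_abs_self b).trans (abs_le_sqrt (by nlinarith [sq_nonneg a])))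
    (sqrt_nonneg _)

theorem sqrt_sq_mul_sin_add_cos_sq_le_one {a : ℝ} (ha : |a| ≤ 1) (x : ℝ) :
    √((a * sin x) ^ 2 + cos x ^ 2) ≤ 1 := by
  have ha2 : a ^ 2 ≤ 1 := (sq_le_one_iff_abs_le_one a).mpr ha
  rw [sqrt_le_one]
  nlinarith [sin_sq_add_cos_sq x, sq_nonneg (sin x)]

theorem polarization_radicand_eq (ϕ θ φ : ℝ) :
    (cos ϕ * cos θ * sin φ - sin ϕ * cos θ * cos φ) ^ 2 + (sin ϕ * sin φ + cos ϕ * cos φ) ^ 2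
      = (cos θ * sin (φ - ϕ)) ^ 2 + cos (φ - ϕ) ^ 2 := by
  rw [sin_sub, cos_sub]
  ring

/-- Corollary 1: `0 ≤ g̃ ≤ 1`, with `g̃ = 1` for normal incidence and reflection;
consequently the matched-angle tile response magnitude `(√(4π)τL_xL_y/λ)·g̃` is at
most `√(4π)L_xL_y/λ`, with equality when `τ = 1`, `θ_t = 0`, `θ_r = 0`. -/
theorem max_continuous_tile_response
    (θt φt ϕ θr φr : ℝ) (hθ1 : 0 ≤ θt) (hθ2 : θt < Real.pi / 2)
    (c gt : ℝ)
    (hc : c = Real.cos θt / Real.sqrt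
        ((Real.cos ϕ * Real.sin θt * Real.cos φt
            + Real.sin ϕ * Real.sin θt * Real.sin φt) ^ 2 + (Real.cos θt) ^ 2))
    (hgt : gt = c * Real.sqrt
        ((Real.cos ϕ * Real.cos θr * Real.sin φr
            - Real.sin ϕ * Real.cos θr * Real.cos φr) ^ 2
          + (Real.sin ϕ * Real.sin φr + Real.cos ϕ * Real.cos φr) ^ 2)) :
    (0 ≤ gt ∧ gt ≤ 1)
    ∧ (θt = 0 → θr = 0 → gt = 1)
    ∧ ∀ lam Lx Ly τ : ℝ, 0 < lam → 0 < Lx → 0 < Ly → 0 < τ → τ ≤ 1 →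
        (Real.sqrt (4 * Real.pi) * τ * Lx * Ly / lam) * gt
          ≤ Real.sqrt (4 * Real.pi) * Lx * Ly / lam
        ∧ (τ = 1 → θt = 0 → θr = 0 →
            (Real.sqrt (4 * Real.pi) * τ * Lx * Ly / lam) * gt
              = Real.sqrt (4 * Real.pi) * Lx * Ly / lam) := by
  rw [polarization_radicand_eq] at hgt
  have hcos : 0 ≤ cos θt := cos_nonneg_of_mem_Icc ⟨by linarith [pi_pos], hθ2.le⟩
  have hc0 : 0 ≤ c := hc ▸ by positivity
  have hc1 : c ≤ 1 := hc ▸ div_sqrt_sq_add_sq_le_one _ _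
  have hgt0 : 0 ≤ gt := hgt ▸ mul_nonneg hc0 (sqrt_nonneg _)
  have hgt1 : gt ≤ 1 :=
    hgt ▸ mul_le_one₀ hc1 (sqrt_nonneg _) (sqrt_sq_mul_sin_add_cos_sq_le_one (abs_cos_le_one θr) _)
  have hnormal : θt = 0 → θr = 0 → gt = 1 := by
    rintro rfl rfl
    simp [hgt, hc]
  refine ⟨⟨hgt0, hgt1⟩, hnormal, fun lam Lx Ly τ hlam hLx hLy _ hτ1 => ⟨?_, ?_⟩⟩
  · have hK : 0 ≤ √(4 * π) * Lx * Ly / lam := by positivity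
    calc √(4 * π) * τ * Lx * Ly / lam * gt = √(4 * π) * Lx * Ly / lam * (τ * gt) := by ring
      _ ≤ √(4 * π) * Lx * Ly / lam := mul_le_of_le_one_right hK (mul_le_one₀ hτ1 hgt0 hgt1)
  · rintro rfl ht hr
    rw [hnormal ht hr]
    ring
end

section
/- Let λ, ρ_d, ρ_t, ρ_r, A be positive real numbers. Define the free-space path-loss of the IRS-assisted link with the maximal IRS response g = √(4π)·A/λ as PL_IRS = (4π·g²/λ²)·(λ/(4π·ρ_t))²·(λ/(4π·ρ_r))², and the free-space path-loss of the direct link as PL_d = (λ/(4π·ρ_d))². Then PL_IRS = PL_d if and only if A = λ·ρ_t·ρ_r/ρ_d, and PL_IRS ≥ PL_d if and only if A ≥ λ·ρ_t·ρ_r/ρ_d. -/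
/-!
With `g = √(4π)·A/λ` the IRS path loss collapses to `(A / (4πρ_tρ_r))²`, and the direct path loss
is `(A_req / (4πρ_tρ_r))²` with `A_req = λρ_tρ_r/ρ_d`. Since `x ↦ (x / k)²` is injective and
monotone on `x ≥ 0`, comparing the two path losses is the same as comparing `A` with `A_req`.
-/

open Real

section
variable {K : Type*} [Field K] [LinearOrder K] [IsStrictOrderedRing K] {a b k : K} {n : ℕ}

theorem div_pow_left_inj₀ (ha : 0 ≤ a) (hb : 0 ≤ b) (hk : k ≠ 0)
    (hn : n ≠ 0) : (a / k) ^ n = (b / k) ^ n ↔ a = b := by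
  rw [div_pow, div_pow, div_left_inj' (pow_ne_zero n hk), pow_left_inj₀ ha hb hn]

theorem div_pow_le_div_pow_iff_left₀ (ha : 0 ≤ a) (hb : 0 ≤ b) (hk : 0 < k)
    (hn : n ≠ 0) : (a / k) ^ n ≤ (b / k) ^ n ↔ a ≤ b := by
  rw [div_pow, div_pow, div_le_div_iff_of_pos_right (pow_pos hk n),
    pow_le_pow_iff_left₀ ha hb hn]

end

theorem irs_pathLoss_eq_sq {lam : ℝ} (hlam : lam ≠ 0) (A ρt ρr : ℝ) :
    (4 * π * (√(4 * π) * A / lam) ^ 2 / lam ^ 2) *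
        (lam / (4 * π * ρt)) ^ 2 * (lam / (4 * π * ρr)) ^ 2 =
      (A / (4 * π * ρt * ρr)) ^ 2 := by
  have hsqrt : √(4 * π) ^ 2 = 4 * π := sq_sqrt (by positivity)
  rw [div_pow _ lam, mul_pow, hsqrt]
  field_simp

theorem direct_pathLoss_eq_sq (lam : ℝ) {ρd ρt ρr : ℝ} (hρd : ρd ≠ 0) (hρt : ρt ≠ 0)
    (hρr : ρr ≠ 0) :
    (lam / (4 * π * ρd)) ^ 2 = (lam * ρt * ρr / ρd / (4 * π * ρt * ρr)) ^ 2 := by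
  field_simp

/-- Corollary 2: with the maximal IRS response `g = √(4π)·A/λ`, the IRS-assisted
path-loss equals (resp. exceeds) the direct-link path-loss iff
`A = λρ_tρ_r/ρ_d` (resp. `A ≥ λρ_tρ_r/ρ_d`). -/
theorem min_irs_area
    (lam ρd ρt ρr A : ℝ)
    (hlam : 0 < lam) (hρd : 0 < ρd) (hρt : 0 < ρt) (hρr : 0 < ρr) (hA : 0 < A)
    (g PLirs PLd : ℝ)
    (hg : g = Real.sqrt (4 * Real.pi) * A / lam)
    (hPLirs : PLirs = (4 * Real.pi * g ^ 2 / lam ^ 2) *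
        (lam / (4 * Real.pi * ρt)) ^ 2 * (lam / (4 * Real.pi * ρr)) ^ 2)
    (hPLd : PLd = (lam / (4 * Real.pi * ρd)) ^ 2) :
    (PLirs = PLd ↔ A = lam * ρt * ρr / ρd)
    ∧ (PLirs ≥ PLd ↔ A ≥ lam * ρt * ρr / ρd) := by
  rw [hPLirs, hg, irs_pathLoss_eq_sq hlam.ne', hPLd,
    direct_pathLoss_eq_sq lam hρd.ne' hρt.ne' hρr.ne', ge_iff_le, ge_iff_le]
  have hk : 0 < 4 * π * ρt * ρr := by positivity
  have hAreq : 0 ≤ lam * ρt * ρr / ρd := by positivity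
  exact ⟨div_pow_left_inj₀ hA.le hAreq hk.ne' two_ne_zero,
    div_pow_le_div_pow_iff_left₀ hAreq hA.le hk two_ne_zero⟩
end

section
/- Let N_t ≥ 1 and let K be a finite nonempty set. For each k ∈ K let h_k ∈ ℂ^{N_t} be a vector, γ_k > 0, and let σ² > 0. Define the feasible set F as the set of families (Q_k)_{k∈K} of N_t × N_t complex matrices such that each Q_k is Hermitian positive semidefinite and for each k ∈ K the real number h_k^H Q_k h_k - γ_k·∑_{k'≠k} h_k^H Q_{k'} h_k is at least γ_k·σ². Suppose F is nonempty. Then the infimum over F of the objective ∑_{k∈K} tr(Q_k) is attained, and moreover it is attained by some family (Q_k*)_{k∈K} ∈ F in which every matrix Q_k* has rank exactly one. -/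
/-!
A PSD family is bounded entrywise by its total trace (`|Q i j| ≤ tr Q`) and the feasible set is
closed, so the total power attains its minimum at some feasible `Q`. Replace each `Qₖ` by its
rank-one compression `Qₖhₖ(Qₖhₖ)ᴴ / hₖᴴQₖhₖ`: it has the same signal term `hₖᴴQₖhₖ`, and by
Cauchy–Schwarz for the semi-inner product `xᴴQₖy` it lies below `Qₖ` in the Loewner order. Hence
interference and power can only drop, so the compressed family is feasible and optimal; it has
rank one because the SINR constraint forces `hₖᴴQₖhₖ > 0`.
-/

open Finset Matrix
open scoped ComplexOrder

namespace Matrix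

open RCLike
open scoped MatrixOrder

variable {m n 𝕜 : Type*} [Fintype n] [RCLike 𝕜]

lemma rank_vecMulVec_eq_one {K : Type*} [Fintype m] [Field K] {w : m → K} {v : n → K}
    (hw : w ≠ 0) (hv : v ≠ 0) : (vecMulVec w v).rank = 1 := by
  classical
  refine le_antisymm (rank_vecMulVec_le w v) (Nat.one_le_iff_ne_zero.mpr fun h0 => ?_)
  rw [rank, Submodule.finrank_eq_zero, LinearMap.range_eq_bot] at h0
  obtain ⟨i, hi⟩ := Function.ne_iff.mp hw
  obtain ⟨j, hj⟩ := Function.ne_iff.mp hv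
  exact mul_ne_zero hi hj (congrFun₂ (toLin'.map_eq_zero_iff.mp h0) i j)

lemma PosSemidef.norm_dotProduct_mulVec_sq_le {A : Matrix n n 𝕜} (hA : A.PosSemidef)
    (x y : n → 𝕜) :
    ‖star x ⬝ᵥ A *ᵥ y‖ ^ 2 ≤ re (star x ⬝ᵥ A *ᵥ x) * re (star y ⬝ᵥ A *ᵥ y) := by
  let _ := A.toSeminormedAddCommGroup hA
  let _ := A.toInnerProductSpace hA
  have hinner (u w : n → 𝕜) : inner 𝕜 u w = star u ⬝ᵥ A *ᵥ w := dotProduct_comm _ _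
  have := inner_mul_inner_self_le (𝕜 := 𝕜) x y
  rwa [← inner_conj_symm y x, norm_conj, ← sq, hinner, hinner, hinner] at this

lemma PosSemidef.norm_apply_le_re_trace {A : Matrix n n 𝕜} (hA : A.PosSemidef) (i j : n) :
    ‖A i j‖ ≤ re A.trace := by
  classical
  have hdiag (k : n) : 0 ≤ re (A k k) := (nonneg_iff.mp hA.diag_nonneg).1
  have hdiag_le (k : n) : re (A k k) ≤ re A.trace := by
    rw [trace, map_sum]
    exact single_le_sum (f := fun k => re (A k k)) (fun k _ => hdiag k) (mem_univ k)
  have hcs := hA.norm_dotProduct_mulVec_sq_le (Pi.single i 1) (Pi.single j 1)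
  simp only [Pi.star_single, star_one, mulVec_single_one, single_one_dotProduct, col_apply] at hcs
  have htrace : 0 ≤ re A.trace := (hdiag i).trans (hdiag_le i)
  refine (pow_le_pow_iff_left₀ (norm_nonneg _) htrace two_ne_zero).mp ?_
  calc ‖A i j‖ ^ 2 ≤ re (A i i) * re (A j j) := hcs
    _ ≤ re A.trace ^ 2 := by
      rw [sq]; exact mul_le_mul (hdiag_le i) (hdiag_le j) (hdiag j) htrace

lemma isClosed_setOf_posSemidef : IsClosed {A : Matrix n n 𝕜 | A.PosSemidef} := by
  simp only [posSemidef_iff_dotProduct_mulVec, Set.ofPred_and, Set.ofPred_forall]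
  exact (isClosed_eq (continuous_id.matrix_conjTranspose) continuous_id).inter
    (isClosed_iInter fun x => isClosed_le continuous_const (by fun_prop))

lemma IsHermitian.star_dotProduct_mulVec_self_eq_ofReal_re {A : Matrix n n 𝕜}
    (hA : A.IsHermitian) (x : n → 𝕜) : star x ⬝ᵥ A *ᵥ x = (re (star x ⬝ᵥ A *ᵥ x) : 𝕜) :=
  (conj_eq_iff_re.mp (conj_eq_iff_im.mpr (hA.im_star_dotProduct_mulVec_self x))).symm

lemma star_dotProduct_vecMulVec_self_star_mulVec (w x : n → 𝕜) :
    star x ⬝ᵥ vecMulVec w (star w) *ᵥ x = (‖star w ⬝ᵥ x‖ ^ 2 : ℝ) := by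
  rw [vecMulVec_mulVec, dotProduct_smul, op_smul_eq_mul, star_dotProduct x w, ofReal_pow]
  exact conj_mul _

lemma IsHermitian.star_mulVec_dotProduct {A : Matrix n n 𝕜} (hA : A.IsHermitian) (v x : n → 𝕜) :
    star (A *ᵥ v) ⬝ᵥ x = star v ⬝ᵥ A *ᵥ x := by
  rw [star_mulVec, hA.eq, dotProduct_mulVec]

-- `(A v)(A v)ᴴ / vᴴ A v`, which is `0` when `vᴴ A v = 0` since `0⁻¹ = 0`.
noncomputable def rankOneCompression (A : Matrix n n 𝕜) (v : n → 𝕜) : Matrix n n 𝕜 :=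
  (re (star v ⬝ᵥ A *ᵥ v))⁻¹ • vecMulVec (A *ᵥ v) (star (A *ᵥ v))

variable {A : Matrix n n 𝕜}

lemma star_dotProduct_rankOneCompression_mulVec (hA : A.IsHermitian) (v x : n → 𝕜) :
    star x ⬝ᵥ rankOneCompression A v *ᵥ x
      = ((re (star v ⬝ᵥ A *ᵥ v))⁻¹ * ‖star v ⬝ᵥ A *ᵥ x‖ ^ 2 : ℝ) := by
  rw [rankOneCompression, smul_mulVec, dotProduct_smul,
    star_dotProduct_vecMulVec_self_star_mulVec, hA.star_mulVec_dotProduct, real_smul_eq_coe_mul,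
    ← ofReal_mul]

lemma posSemidef_rankOneCompression (hA : A.PosSemidef) (v : n → 𝕜) :
    (rankOneCompression A v).PosSemidef :=
  (posSemidef_vecMulVec_self_star _).smul (inv_nonneg.mpr (hA.re_dotProduct_nonneg v))

lemma rankOneCompression_le (hA : A.PosSemidef) (v : n → 𝕜) : rankOneCompression A v ≤ A := by
  refine le_iff.mpr (.of_dotProduct_mulVec_nonneg
    (hA.isHermitian.sub (posSemidef_rankOneCompression hA v).isHermitian) fun x => ?_)
  rw [sub_mulVec, dotProduct_sub, star_dotProduct_rankOneCompression_mulVec hA.isHermitian,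
    hA.isHermitian.star_dotProduct_mulVec_self_eq_ofReal_re x, ← ofReal_sub, ofReal_nonneg,
    sub_nonneg]
  rcases (hA.re_dotProduct_nonneg v).eq_or_lt with hc | hc
  · simp [← hc, hA.re_dotProduct_nonneg x]
  · rw [inv_mul_le_iff₀ hc]
    simpa [mul_comm] using hA.norm_dotProduct_mulVec_sq_le v x

lemma star_dotProduct_rankOneCompression_mulVec_self (hA : A.PosSemidef) (v : n → 𝕜) :
    star v ⬝ᵥ rankOneCompression A v *ᵥ v = star v ⬝ᵥ A *ᵥ v := by
  rw [star_dotProduct_rankOneCompression_mulVec hA.isHermitian,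
    hA.isHermitian.star_dotProduct_mulVec_self_eq_ofReal_re v]
  simp only [ofReal_re, norm_ofReal, abs_of_nonneg (hA.re_dotProduct_nonneg v), sq, ← mul_assoc,
    inv_mul_mul_self]

lemma rank_rankOneCompression {v : n → 𝕜} (hv : 0 < re (star v ⬝ᵥ A *ᵥ v)) :
    (rankOneCompression A v).rank = 1 := by
  have hAv : A *ᵥ v ≠ 0 := fun h0 => hv.ne' (by simp [h0])
  rw [rankOneCompression, ← smul_vecMulVec]
  exact rank_vecMulVec_eq_one (smul_ne_zero (inv_ne_zero hv.ne') hAv) (star_ne_zero.mpr hAv)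

lemma re_trace_le_of_le {A B : Matrix n n 𝕜} (h : A ≤ B) : re A.trace ≤ re B.trace := by
  have := (nonneg_iff.mp (le_iff.mp h).trace_nonneg).1
  rwa [trace_sub, map_sub, sub_nonneg] at this

lemma re_dotProduct_mulVec_le_of_le {A B : Matrix n n 𝕜} (h : A ≤ B) (x : n → 𝕜) :
    re (star x ⬝ᵥ A *ᵥ x) ≤ re (star x ⬝ᵥ B *ᵥ x) := by
  have := (le_iff.mp h).re_dotProduct_nonneg x
  rwa [sub_mulVec, dotProduct_sub, map_sub, sub_nonneg] at this

lemma isCompact_setOf_posSemidef_re_trace_le (c : ℝ) :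
    IsCompact {A : Matrix n n 𝕜 | A.PosSemidef ∧ re A.trace ≤ c} := by
  have hbox : IsCompact (Set.univ.pi fun _ : n => Set.univ.pi fun _ : n =>
      Metric.closedBall (0 : 𝕜) c) :=
    isCompact_univ_pi fun _ => isCompact_univ_pi fun _ => isCompact_closedBall _ _
  refine hbox.of_isClosed_subset (isClosed_setOf_posSemidef.inter
    (isClosed_le (continuous_re.comp continuous_id.matrix_trace) continuous_const)) ?_
  rintro A ⟨hA, hAc⟩ i - j -
  simpa using (hA.norm_apply_le_re_trace i j).trans hAc

end Matrix

section SinrFeasibility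

open RCLike
open scoped MatrixOrder

variable {ι n 𝕜 : Type*} [Fintype ι] [Fintype n] [RCLike 𝕜]

lemma exists_isMinOn_sum_re_trace {F : Set (ι → Matrix n n 𝕜)} (hF : IsClosed F)
    (hpsd : ∀ Q ∈ F, ∀ k, (Q k).PosSemidef) (hne : F.Nonempty) :
    ∃ Q ∈ F, IsMinOn (fun Q => ∑ k, re (Q k).trace) F Q := by
  obtain ⟨Q₀, hQ₀⟩ := hne
  have hcont : Continuous fun Q : ι → Matrix n n 𝕜 => ∑ k, re (Q k).trace :=
    continuous_finsetSum _ fun k _ => continuous_re.comp (continuous_apply k).matrix_trace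
  have hK : IsCompact (Set.univ.pi fun _ : ι =>
      {A : Matrix n n 𝕜 | A.PosSemidef ∧ re A.trace ≤ ∑ k, re (Q₀ k).trace}) :=
    isCompact_univ_pi fun _ => isCompact_setOf_posSemidef_re_trace_le _
  refine hcont.continuousOn.exists_isMinOn' hF hQ₀ (Filter.eventually_inf_principal.mpr ?_)
  filter_upwards [hK.compl_mem_cocompact] with Q hQK hQF
  by_contra! hlt
  refine hQK fun k _ => ⟨hpsd Q hQF k, le_trans ?_ hlt.le⟩
  exact single_le_sum (f := fun k => re (Q k).trace)
    (fun k _ => (nonneg_iff.mp (hpsd Q hQF k).trace_nonneg).1) (mem_univ k)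

-- The SINR constraints `hₖᴴQₖhₖ / (σ² + ∑_{k' ≠ k} hₖᴴQₖ'hₖ) ≥ γₖ`, cleared of denominators.
def sinrFeasibleSet [DecidableEq ι] (h : ι → n → 𝕜) (γ : ι → ℝ) (σ2 : ℝ) :
    Set (ι → Matrix n n 𝕜) :=
  {Q | (∀ k, (Q k).PosSemidef) ∧ ∀ k,
    re (star (h k) ⬝ᵥ Q k *ᵥ h k) - γ k * ∑ k' ∈ univ.erase k, re (star (h k) ⬝ᵥ Q k' *ᵥ h k)
      ≥ γ k * σ2}

variable [DecidableEq ι] {h : ι → n → 𝕜} {γ : ι → ℝ} {σ2 : ℝ}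

lemma isClosed_sinrFeasibleSet (h : ι → n → 𝕜) (γ : ι → ℝ) (σ2 : ℝ) :
    IsClosed (sinrFeasibleSet h γ σ2) := by
  have hquad (k k' : ι) :
      Continuous fun Q : ι → Matrix n n 𝕜 => re (star (h k) ⬝ᵥ Q k' *ᵥ h k) :=
    continuous_re.comp (continuous_const.dotProduct
      ((continuous_apply k').matrix_mulVec continuous_const))
  simp only [sinrFeasibleSet, Set.ofPred_and, Set.ofPred_forall]
  exact (isClosed_iInter fun k => isClosed_setOf_posSemidef.preimage (continuous_apply k)).inter
    (isClosed_iInter fun k => isClosed_le continuous_const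
      ((hquad k k).sub (continuous_const.mul (continuous_finsetSum _ fun k' _ => hquad k k'))))

lemma re_signal_pos_of_mem_sinrFeasibleSet {Q : ι → Matrix n n 𝕜}
    (hQ : Q ∈ sinrFeasibleSet h γ σ2) (hγ : ∀ k, 0 < γ k) (hσ : 0 < σ2) (k : ι) :
    0 < re (star (h k) ⬝ᵥ Q k *ᵥ h k) := by
  have hinterference : 0 ≤ ∑ k' ∈ univ.erase k, re (star (h k) ⬝ᵥ Q k' *ᵥ h k) :=
    sum_nonneg fun k' _ => (hQ.1 k').re_dotProduct_nonneg (h k)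
  nlinarith [hQ.2 k, hγ k, mul_pos (hγ k) hσ]

lemma mem_sinrFeasibleSet_of_le {Q Q' : ι → Matrix n n 𝕜}
    (hQ : Q ∈ sinrFeasibleSet h γ σ2) (hγ : ∀ k, 0 ≤ γ k) (hQ' : ∀ k, (Q' k).PosSemidef)
    (hle : ∀ k, Q' k ≤ Q k)
    (hsignal : ∀ k, star (h k) ⬝ᵥ Q' k *ᵥ h k = star (h k) ⬝ᵥ Q k *ᵥ h k) :
    Q' ∈ sinrFeasibleSet h γ σ2 := by
  refine ⟨hQ', fun k => ?_⟩
  have hinterference := sum_le_sum fun k' (_ : k' ∈ univ.erase k) =>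
    re_dotProduct_mulVec_le_of_le (hle k') (h k)
  have hsinr := hQ.2 k
  rw [hsignal k]
  nlinarith [mul_le_mul_of_nonneg_left hinterference (hγ k)]

end SinrFeasibility

theorem sdp_rank_one_solution_general
    {ι : Type*} [Fintype ι] [DecidableEq ι]
    (Nt : ℕ)
    (h : ι → (Fin Nt → ℂ))
    (γ : ι → ℝ) (hγ : ∀ k, 0 < γ k) (σ2 : ℝ) (hσ : 0 < σ2)
    (F : Set (ι → Matrix (Fin Nt) (Fin Nt) ℂ))
    (hF : F = {Q | (∀ k, (Q k).PosSemidef) ∧ ∀ k,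
        (star (h k) ⬝ᵥ (Q k) *ᵥ (h k)).re
          - γ k * ∑ k' ∈ univ.erase k, (star (h k) ⬝ᵥ (Q k') *ᵥ (h k)).re
          ≥ γ k * σ2})
    (hne : F.Nonempty) :
    ∃ Qs ∈ F, (∀ Q ∈ F, ∑ k, ((Qs k).trace).re ≤ ∑ k, ((Q k).trace).re)
      ∧ ∀ k, (Qs k).rank = 1 := by
  change F = sinrFeasibleSet h γ σ2 at hF
  subst hF
  obtain ⟨Q, hQ, hmin⟩ :=
    exists_isMinOn_sum_re_trace (isClosed_sinrFeasibleSet h γ σ2) (fun Q hQ => hQ.1) hne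
  have hpsd k : (Q k).PosSemidef := hQ.1 k
  let Qs k := rankOneCompression (Q k) (h k)
  have hle k := rankOneCompression_le (hpsd k) (h k)
  refine ⟨Qs, mem_sinrFeasibleSet_of_le hQ (fun k => (hγ k).le)
      (fun k => posSemidef_rankOneCompression (hpsd k) (h k)) hle
      (fun k => star_dotProduct_rankOneCompression_mulVec_self (hpsd k) (h k)),
    fun Q' hQ' => (sum_le_sum fun k _ => re_trace_le_of_le (hle k)).trans (hmin hQ'),
    fun k => rank_rankOneCompression (re_signal_pos_of_mem_sinrFeasibleSet hQ hγ hσ k)⟩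

/-- Lemma 3: in the semidefinite relaxation P2 of the downlink power
minimization problem, if the feasible set is nonempty then the infimum of the
total transmit power `∑_k tr(Q_k)` is attained, and it is attained by a family
in which every matrix has rank exactly one. -/
theorem sdp_rank_one_solution
    {ι : Type*} [Fintype ι] [Nonempty ι] [DecidableEq ι]
    (Nt : ℕ) (hNt : 1 ≤ Nt)
    (h : ι → (Fin Nt → ℂ))
    (γ : ι → ℝ) (hγ : ∀ k, 0 < γ k) (σ2 : ℝ) (hσ : 0 < σ2)
    (F : Set (ι → Matrix (Fin Nt) (Fin Nt) ℂ))
    (hF : F = {Q | (∀ k, (Q k).PosSemidef) ∧ ∀ k,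
        (star (h k) ⬝ᵥ (Q k) *ᵥ (h k)).re
          - γ k * ∑ k' ∈ univ.erase k, (star (h k) ⬝ᵥ (Q k') *ᵥ (h k)).re
          ≥ γ k * σ2})
    (hne : F.Nonempty) :
    ∃ Qs ∈ F, (∀ Q ∈ F, ∑ k, ((Qs k).trace).re ≤ ∑ k, ((Q k).trace).re)
      ∧ ∀ k, (Qs k).rank = 1 :=
  sdp_rank_one_solution_general Nt h γ hγ σ2 hσ F hF hne
end
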